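/- The function Q is differentiable on D, and for every x ∈ D, writing y := (α − p_A·x)/p_B and letting θ̂_A := μ_A − β_A + σ̂_A·Φ⁻¹(1−x) and θ̂_B := μ_B − β_B + σ̂_B·Φ⁻¹(1−y) (the selection thresholds for which the group selection rates equal x and y respectively), the derivative of Q satisfies Q′(x) = (p_A/α)·[ ((θ̂_A + β_A)·η_A² + μ_A·σ_A²)/(η_A² + σ_A²) − ((θ̂_B + β_B)·η_B² + μ_B·σ_B²)/(η_B² + σ_B²) ]. -/

import Mathlib

noncomputable def gpdf (t : ℝ) : ℝ := Real.exp (-t ^ 2 / 2) / Real.sqrt (2 * Real.pi)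

noncomputable def gcdf (x : ℝ) : ℝ := ∫ t in Set.Iic x, gpdf t

noncomputable def gquant : ℝ → ℝ := Function.invFun gcdf

noncomputable def sHat (η σ : ℝ) : ℝ := Real.sqrt (η ^ 2 + σ ^ 2)

noncomputable def sTil (η σ : ℝ) : ℝ := η ^ 2 / sHat η σ

def Dset (pA α : ℝ) : Set ℝ :=
  {x | x ∈ Set.Ioo (0:ℝ) 1 ∧ (α - pA * x) / (1 - pA) ∈ Set.Ioo (0:ℝ) 1}

noncomputable def Qfun (pA α μA μB sA sB x : ℝ) : ℝ :=
  (1 / α) * (pA * (μA * x + sA * gpdf (gquant (1 - x)))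
    + (1 - pA) * (μB * ((α - pA * x) / (1 - pA))
      + sB * gpdf (gquant (1 - (α - pA * x) / (1 - pA)))))

noncomputable def clampTo (lo hi x : ℝ) : ℝ := min hi (max lo x)

/-!
Since `φ' t = -t φ t` and `(Φ⁻¹)' p = 1 / φ (Φ⁻¹ p)`, the map `u ↦ φ (Φ⁻¹ (1 - u))` has
derivative `Φ⁻¹ (1 - u)`. Hence the contribution `μ u + σ̃ φ (Φ⁻¹ (1 - u))` of a group selected
at rate `u` has derivative `μ + σ̃ Φ⁻¹ (1 - u)`, and the chain rule through
`y = (α - p_A x) / p_B`, with `dy/dx = -p_A / p_B`, gives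
`Q' x = (p_A / α) (μ_A + σ̃_A Φ⁻¹ (1 - x) - μ_B - σ̃_B Φ⁻¹ (1 - y))`.
Each of these terms is the Gaussian posterior mean of the latent quality given the observed
score at the threshold `θ̂`, which is the bracketed expression of the theorem.
-/

open Set Filter Topology MeasureTheory ProbabilityTheory

lemma hasStrictDerivAt_integral_Iic {f : ℝ → ℝ} (hf : Continuous f) (hfi : Integrable f)
    (x : ℝ) : HasStrictDerivAt (fun u => ∫ t in Iic u, f t) (f x) x := by
  have hsplit : (fun u => ∫ t in Iic u, f t)
      = fun u => (∫ t in Iic 0, f t) + ∫ t in 0..u, f t := by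
    ext u
    rw [← intervalIntegral.integral_Iic_sub_Iic hfi.integrableOn hfi.integrableOn, add_sub_cancel]
  rw [hsplit]
  exact (hf.integral_hasStrictDerivAt 0 x).const_add _

lemma gpdf_eq_gaussianPDFReal : gpdf = gaussianPDFReal 0 1 := by
  ext t
  simp [gpdf, gaussianPDFReal, div_eq_inv_mul]

lemma gpdf_pos (t : ℝ) : 0 < gpdf t := by
  unfold gpdf
  positivity

lemma hasDerivAt_gpdf (t : ℝ) : HasDerivAt gpdf (-t * gpdf t) t := by
  have hexponent : HasDerivAt (fun u : ℝ => -u ^ 2 / 2) (-t) t :=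
    ((hasDerivAt_pow 2 t).neg.div_const 2).congr_deriv (by ring)
  exact (hexponent.exp.div_const _).congr_deriv (by unfold gpdf; ring)

lemma continuous_gpdf : Continuous gpdf := by
  unfold gpdf
  fun_prop

lemma integrable_gpdf : Integrable gpdf :=
  gpdf_eq_gaussianPDFReal ▸ integrable_gaussianPDFReal 0 1

lemma gcdf_eq_cdf : gcdf = cdf (gaussianReal 0 1) := by
  ext x
  rw [cdf_eq_real, measureReal_def, gaussianReal_apply_eq_integral _ one_ne_zero,
    ENNReal.toReal_ofReal
      (setIntegral_nonneg measurableSet_Iic fun t _ => gaussianPDFReal_nonneg _ _ t),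
    gcdf, gpdf_eq_gaussianPDFReal]

lemma hasStrictDerivAt_gcdf (x : ℝ) : HasStrictDerivAt gcdf (gpdf x) x :=
  hasStrictDerivAt_integral_Iic continuous_gpdf integrable_gpdf x

lemma gcdf_strictMono : StrictMono gcdf :=
  strictMono_of_hasDerivAt_pos (fun x => (hasStrictDerivAt_gcdf x).hasDerivAt) gpdf_pos

lemma mem_range_gcdf {p : ℝ} (hp : p ∈ Ioo 0 1) : p ∈ range gcdf := by
  have hcont : Continuous gcdf :=
    continuous_iff_continuousAt.2 fun x => (hasStrictDerivAt_gcdf x).hasDerivAt.continuousAt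
  rw [gcdf_eq_cdf] at hcont ⊢
  exact mem_range_of_exists_le_of_exists_ge hcont
    ((tendsto_cdf_atBot _).eventually (eventually_le_nhds hp.1)).exists
    ((tendsto_cdf_atTop _).eventually (eventually_ge_nhds hp.2)).exists

lemma Function.Injective.hasStrictDerivAt_invFun {𝕜 : Type*} [NontriviallyNormedField 𝕜]
    [CompleteSpace 𝕜] {f : 𝕜 → 𝕜} {f' a : 𝕜} (hinj : Function.Injective f)
    (hf : HasStrictDerivAt f f' a) (hf' : f' ≠ 0) :
    HasStrictDerivAt (Function.invFun f) f'⁻¹ (f a) :=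
  hf.to_local_left_inverse hf' (Eventually.of_forall (Function.leftInverse_invFun hinj))

lemma hasDerivAt_gquant {p : ℝ} (hp : p ∈ Ioo 0 1) :
    HasDerivAt gquant (gpdf (gquant p))⁻¹ p := by
  obtain ⟨t, rfl⟩ := mem_range_gcdf hp
  rw [gquant, Function.leftInverse_invFun gcdf_strictMono.injective t]
  exact (gcdf_strictMono.injective.hasStrictDerivAt_invFun (hasStrictDerivAt_gcdf t)
    (gpdf_pos t).ne').hasDerivAt

lemma hasDerivAt_gpdf_gquant {p : ℝ} (hp : p ∈ Ioo 0 1) :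
    HasDerivAt (fun q => gpdf (gquant q)) (-gquant p) p :=
  ((hasDerivAt_gpdf _).comp p (hasDerivAt_gquant hp)).congr_deriv
    (by rw [mul_inv_cancel_right₀ (gpdf_pos _).ne'])

noncomputable def selectionUtility (μ s u : ℝ) : ℝ := μ * u + s * gpdf (gquant (1 - u))

lemma hasDerivAt_selectionUtility (μ s : ℝ) {u : ℝ} (hu : u ∈ Ioo 0 1) :
    HasDerivAt (selectionUtility μ s) (μ + s * gquant (1 - u)) u := by
  have hquantile : 1 - u ∈ Ioo (0 : ℝ) 1 := ⟨by linarith [hu.2], by linarith [hu.1]⟩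
  have htail := (hasDerivAt_gpdf_gquant hquantile).comp u ((hasDerivAt_id u).const_sub 1)
  exact (((hasDerivAt_id u).const_mul μ).add (htail.const_mul s)).congr_deriv (by simp)

lemma Qfun_eq_selectionUtility (pA α μA μB sA sB : ℝ) :
    Qfun pA α μA μB sA sB = fun x => (1 / α) * (pA * selectionUtility μA sA x
      + (1 - pA) * selectionUtility μB sB ((α - pA * x) / (1 - pA))) :=
  rfl

lemma hasDerivAt_Qfun {pA α μA μB sA sB x : ℝ} (hpA : pA ≠ 1) (hx : x ∈ Dset pA α) :
    HasDerivAt (Qfun pA α μA μB sA sB)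
      ((pA / α) * ((μA + sA * gquant (1 - x))
        - (μB + sB * gquant (1 - (α - pA * x) / (1 - pA))))) x := by
  have hpB : 1 - pA ≠ 0 := sub_ne_zero.2 hpA.symm
  have hy : HasDerivAt (fun u => (α - pA * u) / (1 - pA)) (-pA / (1 - pA)) x :=
    (((hasDerivAt_id x).const_mul pA).const_sub α).div_const _ |>.congr_deriv (by simp)
  have hB := (hasDerivAt_selectionUtility μB sB hx.2).comp x hy
  have hQ := (((hasDerivAt_selectionUtility μA sA hx.1).const_mul pA).add
    (hB.const_mul (1 - pA))).const_mul (1 / α)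
  rw [Qfun_eq_selectionUtility]
  refine hQ.congr_deriv ?_
  field_simp
  ring

lemma posterior_mean_eq_add_sTil_mul (μ β q η σ : ℝ) (h : 0 < η ^ 2 + σ ^ 2) :
    (((μ - β + sHat η σ * q) + β) * η ^ 2 + μ * σ ^ 2) / (η ^ 2 + σ ^ 2)
      = μ + sTil η σ * q := by
  have hsq : sHat η σ ^ 2 = η ^ 2 + σ ^ 2 := Real.sq_sqrt h.le
  have hpos : 0 < sHat η σ := Real.sqrt_pos.2 h
  rw [sTil]
  field_simp
  linear_combination q * η ^ 2 * hsq

theorem stmt3_general (pA α μA μB ηA ηB σA σB βA βB : ℝ)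
    (hpA : pA ∈ Set.Ioo (0:ℝ) 1)
    (hσA : 0 < σA) (hσB : 0 < σB) :
    DifferentiableOn ℝ (Qfun pA α μA μB (sTil ηA σA) (sTil ηB σB)) (Dset pA α)
    ∧ ∀ x ∈ Dset pA α,
        HasDerivAt (Qfun pA α μA μB (sTil ηA σA) (sTil ηB σB))
          ((pA / α) *
            ((((μA - βA + sHat ηA σA * gquant (1 - x)) + βA) * ηA ^ 2 + μA * σA ^ 2)
                / (ηA ^ 2 + σA ^ 2)
              - (((μB - βB + sHat ηB σB * gquant (1 - (α - pA * x) / (1 - pA))) + βB) * ηB ^ 2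
                  + μB * σB ^ 2) / (ηB ^ 2 + σB ^ 2))) x := by
  refine ⟨fun x hx => (hasDerivAt_Qfun hpA.2.ne hx).differentiableAt.differentiableWithinAt,
    fun x hx => ?_⟩
  rw [posterior_mean_eq_add_sTil_mul _ _ _ _ _ (by positivity),
    posterior_mean_eq_add_sTil_mul _ _ _ _ _ (by positivity)]
  exact hasDerivAt_Qfun hpA.2.ne hx

/-- differentiability of the utility `Q` on `D` and the explicit
expression of its derivative. -/
theorem stmt3 (pA α μA μB ηA ηB σA σB βA βB : ℝ)
    (hpA : pA ∈ Set.Ioo (0:ℝ) 1) (hα : α ∈ Set.Ioo (0:ℝ) 1)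
    (hηA : 0 < ηA) (hηB : 0 < ηB) (hσA : 0 < σA) (hσB : 0 < σB) :
    DifferentiableOn ℝ (Qfun pA α μA μB (sTil ηA σA) (sTil ηB σB)) (Dset pA α)
    ∧ ∀ x ∈ Dset pA α,
        HasDerivAt (Qfun pA α μA μB (sTil ηA σA) (sTil ηB σB))
          ((pA / α) *
            ((((μA - βA + sHat ηA σA * gquant (1 - x)) + βA) * ηA ^ 2 + μA * σA ^ 2)
                / (ηA ^ 2 + σA ^ 2)
              - (((μB - βB + sHat ηB σB * gquant (1 - (α - pA * x) / (1 - pA))) + βB) * ηB ^ 2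
                  + μB * σB ^ 2) / (ηB ^ 2 + σB ^ 2))) x :=
  stmt3_general pA α μA μB ηA ηB σA σB βA βB hpA hσA hσB
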